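/- In an acyclic connected component of the state transition graph of a planar or toric trinity, if two paths connect the same pair of states, then the algebraic multiplicity (exponent sum of clockwise minus counter-clockwise moves) of each black triangle is the same along the two paths. -/

import Mathlib

/-!  Combinatorial trinities, Tutte matchings (states), and clock moves,
following Hine and Kálmán, "Clock theorems for triangulated surfaces".

A trinity is encoded combinatorially: `Vertex` is the set of vertices, properly
colored by `vcol` with colors `Fin 3` (0 = red, 1 = green, 2 = blue); `White`
and `Black` are the sets of white and black triangles.  Each triangle has one
vertex of each color (`wvert`, `bvert`) and one edge of each color (the edge of
color `c` being opposite the vertex of color `c`); across its edge of color `c`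
a white triangle `w` meets the black triangle `wadj w c`, and a black triangle
`b` meets the white triangle `badj b c`.  The two triangles sharing an edge of
color `c` share their vertices of the other two colors (`bvert_wadj`).
A planar trinity carries a distinguished outer white triangle (`outer = some o`);
for a toric trinity `outer = none`. -/

structure Trinity where
  Vertex : Type
  White : Type
  Black : Type
  [vertexFintype : Fintype Vertex]
  [whiteFintype : Fintype White]
  [blackFintype : Fintype Black]
  [vertexDecEq : DecidableEq Vertex]
  [whiteDecEq : DecidableEq White]
  [blackDecEq : DecidableEq Black]
  outer : Option White
  vcol : Vertex → Fin 3
  wvert : White → Fin 3 → Vertex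
  bvert : Black → Fin 3 → Vertex
  wadj : White → Fin 3 → Black
  badj : Black → Fin 3 → White
  wvert_col : ∀ w c, vcol (wvert w c) = c
  bvert_col : ∀ b c, vcol (bvert b c) = c
  badj_wadj : ∀ w c, badj (wadj w c) c = w
  wadj_badj : ∀ b c, wadj (badj b c) c = b
  bvert_wadj : ∀ w c c', c' ≠ c → bvert (wadj w c) c' = wvert w c'

attribute [instance] Trinity.vertexFintype Trinity.whiteFintype Trinity.blackFintype
  Trinity.vertexDecEq Trinity.whiteDecEq Trinity.blackDecEq

namespace Trinity

variable (T : Trinity)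

/-- `w` is the outer white triangle. -/
def IsOuter (w : T.White) : Prop := T.outer = some w

instance : DecidablePred T.IsOuter := fun w => decidable_of_iff (T.outer = some w) Iff.rfl

/-- `v` is a root, i.e. a vertex of the outer white triangle (planar case). -/
def IsRoot (v : T.Vertex) : Prop := ∃ w, T.IsOuter w ∧ ∃ c, v = T.wvert w c

/-- A Tutte matching (state): a perfect matching between the non-outer white
triangles and incident non-root vertices.  (For a toric trinity, `IsOuter` and
`IsRoot` are empty conditions, so this is a perfect matching between all white
triangles and all vertices.)  The value on the outer white triangle, if any, is
irrelevant and is normalized by `outer_spec`. -/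
structure State where
  toFun : T.White → T.Vertex
  incident : ∀ w, ∃ c, toFun w = T.wvert w c
  injOn : ∀ w w', ¬ T.IsOuter w → ¬ T.IsOuter w' → toFun w = toFun w' → w = w'
  not_root : ∀ w, ¬ T.IsOuter w → ¬ T.IsRoot (toFun w)
  surj : ∀ v, ¬ T.IsRoot v → ∃ w, ¬ T.IsOuter w ∧ toFun w = v
  outer_spec : ∀ w, T.IsOuter w → toFun w = T.wvert w 0

namespace State

variable {T}

/-- The black triangle through which the arrow representing the match of the
white triangle `w` passes: the arrow of the match `(w, s w)` crosses the edge
of `w` opposite the matched vertex `s w` (the edge of color `vcol (s w)`). -/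
def arrowBlack (s : T.State) (w : T.White) : T.Black := T.wadj w (T.vcol (s.toFun w))

/-- The black triangle `b` is empty in the state `s`: no arrow passes through it. -/
def EmptyAt (s : T.State) (b : T.Black) : Prop :=
  ∀ w, ¬ T.IsOuter w → s.arrowBlack w ≠ b

/-- `b` is a clockwise empty black triangle of `s`:  it is empty and its three
vertices are matched with the three adjacent white triangles in the clockwise
rotational pattern. -/
def IsCW (s : T.State) (b : T.Black) : Prop :=
  s.EmptyAt b ∧ ∀ c, s.toFun (T.badj b c) = T.bvert b (c + 1)

/-- `b` is a counter-clockwise empty black triangle of `s`. -/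
def IsCCW (s : T.State) (b : T.Black) : Prop :=
  s.EmptyAt b ∧ ∀ c, s.toFun (T.badj b c) = T.bvert b (c + 2)

end State

/-- The basic clockwise move (clock move) about the empty black triangle `b`,
turning it from clockwise to counter-clockwise: `t` is obtained from `s` by
changing `b`. -/
def CWMoveAt (s t : T.State) (b : T.Black) : Prop :=
  s.IsCW b ∧ (∀ c, t.toFun (T.badj b c) = T.bvert b (c + 2)) ∧
    ∀ w, (∀ c, w ≠ T.badj b c) → t.toFun w = s.toFun w

/-- A walk in the state transition graph, recording for each step the black
triangle about which the move is performed and the direction of the move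
(`true` = clockwise, `false` = counter-clockwise). -/
inductive Walk : T.State → List (T.Black × Bool) → T.State → Prop
  | nil (s : T.State) : Walk s [] s
  | cw {s t u : T.State} {b : T.Black} {l : List (T.Black × Bool)} :
      T.CWMoveAt s t b → Walk t l u → Walk s ((b, true) :: l) u
  | ccw {s t u : T.State} {b : T.Black} {l : List (T.Black × Bool)} :
      T.CWMoveAt t s b → Walk t l u → Walk s ((b, false) :: l) u

/-- Two states lie in the same connected component of the state transition
graph. -/
def Reaches (s t : T.State) : Prop := ∃ l, T.Walk s l t

/-- A walk consisting of clockwise moves only, about the listed black triangles. -/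
def CWWalk (s : T.State) (l : List T.Black) (t : T.State) : Prop :=
  T.Walk s (l.map fun b => (b, true)) t

/-- A state is recurrent if some non-empty sequence of clockwise moves starts
and ends at it. -/
def Recurrent (s : T.State) : Prop := ∃ l : List T.Black, l ≠ [] ∧ T.CWWalk s l s

/-- `s` belongs to an acyclic component of the state transition graph: no state
in its component is recurrent. -/
def InAcyclic (s : T.State) : Prop := ∀ t, T.Reaches s t → ¬ T.Recurrent t

/-- Two white triangles sharing an adjacent black triangle. -/
def WAdj (w w' : T.White) : Prop := ∃ c c', T.wadj w c = T.wadj w' c'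

/-- Rotation (by one step, in the direction induced by the orientation) of the
white triangles around the vertex `v`. -/
def rotAt (v : T.Vertex) (w : T.White) : T.White :=
  T.badj (T.wadj w (T.vcol v + 1)) (T.vcol v + 2)

/-- The combinatorial data encode a closed connected oriented surface: the
triangles form a connected complex and the link of every vertex is a single
cycle of triangles. -/
def Surface : Prop :=
  (∀ w w' : T.White, Relation.ReflTransGen T.WAdj w w') ∧
  ∀ (v : T.Vertex) (w w' : T.White), T.wvert w (T.vcol v) = v → T.wvert w' (T.vcol v) = v →
    ∃ k : ℕ, (T.rotAt v)^[k] w = w'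

/-- A planar trinity: a trinity on the sphere (Euler characteristic 2) with a
distinguished outer white triangle. -/
def Planar : Prop :=
  T.Surface ∧ T.outer.isSome ∧ Fintype.card T.Vertex = Fintype.card T.White + 2

/-- A toric trinity: a trinity on the torus (Euler characteristic 0), with all
triangles and vertices taking part in matchings. -/
def Toric : Prop :=
  T.Surface ∧ T.outer = none ∧ Fintype.card T.Vertex = Fintype.card T.White

/-- The configuration of a general clock move: three white triangles `W 0, W 1,
W 2` and three vertices `u 0, u 1, u 2` (one of each color) such that `W c`
contains the vertices `u c'` for both colors `c' ≠ c`; the three edges of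
colors `c` of the triangles `W c` then form a closed triangle of edges through
the vertices `u`, bounding a disk on the side opposite to the whites.
(For the boundary of a black triangle `b` this recovers `W = T.badj b`,
`u = T.bvert b`.) -/
def CombConfig (W : Fin 3 → T.White) (u : Fin 3 → T.Vertex) : Prop :=
  ∀ c c' : Fin 3, c' ≠ c → T.wvert (W c) c' = u c'

/-- A general clockwise move from `s` to `t`: about some clock-move
configuration whose three (non-outer) white triangles are matched with its
three vertices, the matching is switched from the clockwise pattern to the
counter-clockwise one, all other matches being kept. -/
def CWMove (s t : T.State) : Prop :=
  ∃ (W : Fin 3 → T.White) (u : Fin 3 → T.Vertex),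
    T.CombConfig W u ∧ (∀ c, ¬ T.IsOuter (W c)) ∧
    (∀ c, s.toFun (W c) = u (c + 1)) ∧ (∀ c, t.toFun (W c) = u (c + 2)) ∧
    ∀ w, (∀ c, w ≠ W c) → t.toFun w = s.toFun w

/-- `P` exhibits the closed triangle of edges determined by the clock-move
configuration `W` as separating: `P` is a two-coloring of the triangles which
changes value exactly across the three edges of the configuration, the white
triangles `W c` being on the `P`-side. -/
def ConfigCut (W : Fin 3 → T.White) (P : T.White ⊕ T.Black → Prop) : Prop :=
  (∀ (w : T.White) (c : Fin 3), (∀ c₀, ¬ (w = W c₀ ∧ c = c₀)) →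
    (P (Sum.inl w) ↔ P (Sum.inr (T.wadj w c)))) ∧
  (∀ c, P (Sum.inl (W c))) ∧ (∀ c, ¬ P (Sum.inr (T.wadj (W c) c)))

/-- A trinity is irreducible if it is not the trinity `F` with a single black
and a single white triangle, and it is not a nontrivial connected sum; i.e.
every separating closed triangle of edges cuts off a single triangle. -/
def Irreducible : Prop :=
  1 < Fintype.card T.White ∧
  ∀ (W : Fin 3 → T.White) (u : Fin 3 → T.Vertex) (P : T.White ⊕ T.Black → Prop),
    T.CombConfig W u → T.ConfigCut W P →
      (∃ b : T.Black, ∀ x, ¬ P x ↔ x = Sum.inr b) ∨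
      (∃ w : T.White, ∀ x, P x ↔ x = Sum.inl w)

/-! ### The directed dual graphs `G_X^*`

For a color `X`, the vertices of the directed graph `G_X^*` are the vertices of
the trinity of color `X` and its directed edges are in natural bijection with
the white triangles: the white triangle `w` corresponds to the dual edge of its
edge of color `X`, directed from the vertex of color `X` of the adjacent black
triangle `wadj w X` (its tail) to the vertex of color `X` of `w` (its head).
The arrows of a state pointing to vertices of color `X` are edges of `G_X^*`. -/

/-- The head of the edge of `G_X^*` corresponding to the white triangle `w`. -/
def head (X : Fin 3) (w : T.White) : T.Vertex := T.wvert w X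

/-- The tail of the edge of `G_X^*` corresponding to the white triangle `w`. -/
def tail (X : Fin 3) (w : T.White) : T.Vertex := T.bvert (T.wadj w X) X

/-- One-step reachability in `G_X^*` along edges from the set `A`. -/
def ARel (X : Fin 3) (A : Finset T.White) (a b : T.Vertex) : Prop :=
  ∃ w ∈ A, T.tail X w = a ∧ T.head X w = b

/-- `A` is a spanning arborescence of `G_X^*`, rooted at the root of color `X`
(the vertex of color `X` of the outer triangle `o`): a spanning tree all of
whose edges point away from the root. -/
def IsArborescence (X : Fin 3) (o : T.White) (A : Finset T.White) : Prop :=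
  (∀ w ∈ A, T.head X w ≠ T.wvert o X) ∧
  (∀ v : T.Vertex, T.vcol v = X → v ≠ T.wvert o X → ∃! w, w ∈ A ∧ T.head X w = v) ∧
  (∀ v : T.Vertex, T.vcol v = X → Relation.ReflTransGen (T.ARel X A) (T.wvert o X) v)

/-- One step of the tour tracing (counter-clockwise) the boundary of a small
neighborhood of the spanning tree `A` in `G_X^*`.  A position of the tour is a
dart `(w, d)`: the edge `w` of `G_X^*` together with a direction (`true`:
towards the head, `false`: towards the tail).  From the end of the dart one
rotates to the next edge-end around the vertex; if that edge belongs to `A` it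
is traversed away from the vertex, and otherwise its end is crossed (recorded
by bouncing back towards the vertex). -/
def tourStep (X : Fin 3) (A : Finset T.White) : T.White × Bool → T.White × Bool :=
  fun p =>
    if p.2 then
      let w' := T.badj (T.wadj p.1 (X + 1)) X
      (w', decide (w' ∈ A))
    else
      let w' := T.badj (T.wadj p.1 X) (X + 2)
      (w', decide (w' ∉ A))

/-- The position of the edge `w` of `G_X^*` in the ordering `<_A` determined by
the spanning arborescence `A`: the first time the boundary tour of a
neighborhood of `A` (started on the outer white triangle `o`, i.e. at the dart
arriving at the root through `o`) travels along `w` (if `w ∈ A`) or crosses an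
end of `w` (if `w ∉ A`). -/
noncomputable def ordIdx (X : Fin 3) (o : T.White) (A : Finset T.White) (w : T.White) : ℕ :=
  sInf {k : ℕ | ((T.tourStep X A)^[k] (o, true)).1 = w}

/-- `A` is the clocked arborescence of `G_X^*`: the spanning arborescence such
that for every non-root vertex `y` of color `X`, the edge of `A` pointing to
`y` is smallest, with respect to the ordering `<_A`, among all edges of
`G_X^*` terminating at `y`. -/
def IsClocked (X : Fin 3) (o : T.White) (A : Finset T.White) : Prop :=
  T.IsArborescence X o A ∧
    ∀ w ∈ A, ∀ w' : T.White, w' ≠ w → T.head X w' = T.head X w →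
      T.ordIdx X o A w < T.ordIdx X o A w'

/-! ### Wreaths (toric trinities) -/

/-- A nonempty set `C` of edges of `G_R^*` forming a single (directed) cycle:
at every red vertex the in-degree and out-degree in `C` agree and are at most
one, and `C` is connected. -/
def IsDirCycle (C : Finset T.White) : Prop :=
  C.Nonempty ∧
  (∀ v : T.Vertex, T.vcol v = 0 →
    (C.filter fun w => T.head 0 w = v).card = (C.filter fun w => T.tail 0 w = v).card ∧
    (C.filter fun w => T.head 0 w = v).card ≤ 1) ∧
  ∀ w ∈ C, ∀ w' ∈ C,
    Relation.ReflTransGen (fun a b => a ∈ C ∧ b ∈ C ∧ T.head 0 a = T.tail 0 b) w w'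

/-- The cycle `C` of edges of `G_R^*` separates the surface: the faces of
`G_R^*` (which correspond to the green and blue vertices of the trinity) can be
two-colored so that the two faces adjacent along an edge of `G_R^*` (namely the
faces of the green and the blue endpoint of the crossed red edge) get the same
color exactly when the edge does not belong to `C`. -/
def SeparatingSet (C : Finset T.White) : Prop :=
  ∃ P : T.Vertex → Prop,
    (∀ w : T.White, w ∉ C → (P (T.wvert w 1) ↔ P (T.wvert w 2))) ∧
    ∀ w ∈ C, ¬ (P (T.wvert w 1) ↔ P (T.wvert w 2))

/-- A wreath: a set `W` of edges of the directed dual graph `G_R^*` such that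
every red vertex has exactly one edge of `W` pointing to it and the edges of
`W` form no separating cycle. -/
def IsWreath (W : Finset T.White) : Prop :=
  (∀ v : T.Vertex, T.vcol v = 0 → ∃! w, w ∈ W ∧ T.head 0 w = v) ∧
  ∀ C ⊆ W, T.IsDirCycle C → ¬ T.SeparatingSet C

end Trinity

/-!
Clockwise moves at distinct black triangles commute, since the white triangles around two
distinct clockwise empty black triangles are disjoint, and a move is determined by its black
triangle. In an acyclic component clockwise moves terminate, so by the usual Newman-style
induction all maximal sequences of clockwise moves from a state use each black triangle equally
often. This count is a potential that drops by one at `b` under a clockwise move at `b`; the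
algebraic multiplicity of `b` along any walk is therefore the difference of its values at the two
ends.
-/

theorem Equiv.Perm.exists_apply_add_one {X : Type*} {n : ℕ} {f : Fin (n + 1) → X}
    (hf : Function.Injective f) :
    ∃ σ : Equiv.Perm X, (∀ c, σ (f c) = f (c + 1)) ∧ ∀ x, (∀ c, x ≠ f c) → σ x = x := by
  classical
  let e := Equiv.ofInjective f hf
  refine ⟨(finRotate (n + 1)).extendDomain e, fun c => ?_, fun x hx => ?_⟩
  · simpa [e, finRotate_apply] using (finRotate (n + 1)).extendDomain_apply_image e c
  · exact (finRotate (n + 1)).extendDomain_apply_not_subtype e (by simpa [eq_comm] using hx)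

namespace LTS

variable {α β : Type*} (R : α → β → α → Prop)

inductive Path : α → List β → α → Prop
  | nil (x : α) : Path x [] x
  | cons {x y z : α} {b : β} {l : List β} : R x b y → Path y l z → Path x (b :: l) z

def Step (x y : α) : Prop := ∃ b, R x b y

def Terminal (x : α) : Prop := ∀ b y, ¬ R x b y

def Deterministic : Prop := ∀ ⦃x b y y'⦄, R x b y → R x b y' → y = y'

def Diamond : Prop := ∀ ⦃x b b' y y'⦄, b ≠ b' → R x b y → R x b' y' → ∃ z, R y b' z ∧ R y' b z

open Classical in
/-- The labels of some path from `x` to a terminal state (`0` if there is none); by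
`Path.perm_of_terminal` the choice of path does not matter. -/
noncomputable def potential (x : α) : Multiset β :=
  if h : ∃ l y, Path R x l y ∧ Terminal R y then h.choose else 0

variable {R}

theorem exists_path_terminal {x : α} (hx : Acc (flip (Step R)) x) :
    ∃ l y, Path R x l y ∧ Terminal R y := by
  induction hx with
  | intro x _ ih =>
    by_cases hterm : Terminal R x
    · exact ⟨[], x, .nil x, hterm⟩
    · simp only [Terminal, not_forall, not_not] at hterm
      obtain ⟨b, y, hxy⟩ := hterm
      obtain ⟨l, z, hyz, hz⟩ := ih y ⟨b, hxy⟩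
      exact ⟨b :: l, z, .cons hxy hyz, hz⟩

theorem Path.perm_of_terminal (hdet : Deterministic R) (hdia : Diamond R) {x : α}
    (hx : Acc (flip (Step R)) x) {l₁ l₂ : List β} {y₁ y₂ : α}
    (h₁ : Path R x l₁ y₁) (hy₁ : Terminal R y₁) (h₂ : Path R x l₂ y₂) (hy₂ : Terminal R y₂) :
    l₁.Perm l₂ := by
  induction hx generalizing l₁ l₂ y₁ y₂ with
  | intro x hacc ih =>
    cases h₁ with
    | nil => cases h₂ with
      | nil => rfl
      | cons hstep _ => exact absurd hstep (hy₁ _ _)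
    | @cons _ x₁ _ b₁ l₁ hx₁ p₁ => cases h₂ with
      | nil => exact absurd hx₁ (hy₂ _ _)
      | @cons _ x₂ _ b₂ l₂ hx₂ p₂ =>
        by_cases hb : b₁ = b₂
        · subst hb
          cases hdet hx₁ hx₂
          exact (ih x₁ ⟨_, hx₁⟩ p₁ hy₁ p₂ hy₂).cons b₁
        · obtain ⟨z, hz₁, hz₂⟩ := hdia hb hx₁ hx₂
          obtain ⟨m, y, hm, hy⟩ := exists_path_terminal ((hacc x₁ ⟨_, hx₁⟩).inv ⟨_, hz₁⟩)
          calc List.Perm (b₁ :: l₁) (b₁ :: b₂ :: m) :=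
                (ih x₁ ⟨_, hx₁⟩ p₁ hy₁ (.cons hz₁ hm) hy).cons b₁
            List.Perm _ (b₂ :: b₁ :: m) := .swap b₂ b₁ m
            List.Perm _ (b₂ :: l₂) := (ih x₂ ⟨_, hx₂⟩ p₂ hy₂ (.cons hz₂ hm) hy).symm.cons b₂

theorem potential_eq_of_path (hdet : Deterministic R) (hdia : Diamond R) {x y : α} {l : List β}
    (hx : Acc (flip (Step R)) x) (h : Path R x l y) (hy : Terminal R y) :
    potential R x = l := by
  have hex : ∃ l y, Path R x l y ∧ Terminal R y := ⟨l, y, h, hy⟩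
  obtain ⟨y', h', hy'⟩ := hex.choose_spec
  rw [potential, dif_pos hex, Multiset.coe_eq_coe]
  exact h'.perm_of_terminal hdet hdia hx hy' h hy

theorem potential_eq_cons (hdet : Deterministic R) (hdia : Diamond R) {x y : α} {b : β}
    (hx : Acc (flip (Step R)) x) (h : R x b y) :
    potential R x = b ::ₘ potential R y := by
  have hy : Acc (flip (Step R)) y := hx.inv ⟨b, h⟩
  obtain ⟨l, z, hl, hz⟩ := exists_path_terminal hy
  rw [potential_eq_of_path hdet hdia hx (.cons h hl) hz, potential_eq_of_path hdet hdia hy hl hz,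
    Multiset.cons_coe]

end LTS

open Relation in
theorem acc_flip_of_finite {α : Type*} [Finite α] {r : α → α → Prop} {P : α → Prop}
    (hP : ∀ ⦃x y⦄, P x → r x y → P y) (hcyc : ∀ x, P x → ¬ Relation.TransGen r x x)
    {x : α} (hx : P x) : Acc (flip r) x := by
  let r' : α → α → Prop := fun y x => r x y ∧ P x
  have : Std.Irrefl (TransGen r') := ⟨fun x hxx => by
    have hPx : P x := by cases hxx with
      | single h => exact h.2
      | tail _ h => exact h.2
    exact hcyc x hPx (transGen_swap.mp (TransGen.mono (fun _ _ h => h.1) _ _ hxx))⟩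
  have hwf : WellFounded r' :=
    Subrelation.wf (fun h => TransGen.single h) (Finite.wellFounded_of_trans_of_irrefl _)
  induction hwf.apply x with
  | intro x _ ih =>
    exact ⟨x, fun y hxy => ih y ⟨hxy, hx⟩ (hP hx hxy)⟩

namespace Trinity

variable {T : Trinity} {s t t' : T.State} {b b' : T.Black}

theorem State.ext (h : s.toFun = t.toFun) : s = t := by
  cases s; cases t; cases h; rfl

instance : Finite T.State := Finite.of_injective State.toFun fun _ _ => State.ext

theorem wvert_injective (w : T.White) : Function.Injective (T.wvert w) := fun c c' h => by
  simpa only [T.wvert_col] using congrArg T.vcol h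

theorem bvert_injective (b : T.Black) : Function.Injective (T.bvert b) := fun c c' h => by
  simpa only [T.bvert_col] using congrArg T.vcol h

theorem bvert_eq_wvert_badj (b : T.Black) {c x : Fin 3} (hx : x ≠ c) :
    T.bvert b x = T.wvert (T.badj b c) x := by
  conv_lhs => rw [← T.wadj_badj b c]
  exact T.bvert_wadj _ _ _ hx

namespace State

theorem IsCW.badj_injective (h : s.IsCW b) : Function.Injective (T.badj b) := fun c c' hcc' =>
  add_right_cancel (bvert_injective b (by rw [← h.2, ← h.2, hcc']))

theorem IsCW.apply_badj_add_one (h : s.IsCW b) (c : Fin 3) :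
    s.toFun (T.badj b (c + 1)) = T.bvert b (c + 2) := by
  rw [h.2, show c + 1 + 1 = c + 2 by omega]

theorem IsCW.not_isOuter_badj (h : s.IsCW b) (c : Fin 3) : ¬ T.IsOuter (T.badj b c) := by
  intro ho
  have hno : ¬ T.IsOuter (T.badj b (c + 1)) := fun ho' =>
    (show c + 1 ≠ c by omega) (h.badj_injective (Option.some_injective _ (ho'.symm.trans ho)))
  refine s.not_root _ hno ⟨T.badj b c, ho, c + 2, ?_⟩
  rw [h.apply_badj_add_one, bvert_eq_wvert_badj b (show c + 2 ≠ c by omega)]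

theorem IsCW.badj_ne_badj (h : s.IsCW b) (h' : s.IsCW b') (hbb : b ≠ b') (c c' : Fin 3) :
    T.badj b c ≠ T.badj b' c' := by
  intro he
  have hc : c = c' := add_right_cancel <| wvert_injective (T.badj b c) <| by
    rw [← bvert_eq_wvert_badj b (show c + 1 ≠ c by omega), ← h.2, he, h'.2,
      bvert_eq_wvert_badj b' (show c' + 1 ≠ c' by omega)]
  subst hc
  exact hbb (by rw [← T.wadj_badj b c, he, T.wadj_badj])

theorem not_isOuter_apply {σ : Equiv.Perm T.White} (hσ : ∀ w, T.IsOuter w → σ w = w)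
    {w : T.White} (hw : ¬ T.IsOuter w) : ¬ T.IsOuter (σ w) := fun ho =>
  hw (by rwa [σ.injective (hσ _ ho)] at ho)

def compPerm (s : T.State) (σ : Equiv.Perm T.White) (hσ : ∀ w, T.IsOuter w → σ w = w)
    (hinc : ∀ w, ∃ c, s.toFun (σ w) = T.wvert w c) : T.State where
  toFun := s.toFun ∘ σ
  incident := hinc
  injOn w w' hw hw' h :=
    σ.injective (s.injOn _ _ (not_isOuter_apply hσ hw) (not_isOuter_apply hσ hw') h)
  not_root w hw := s.not_root _ (not_isOuter_apply hσ hw)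
  surj v hv := by
    obtain ⟨w, hw, rfl⟩ := s.surj v hv
    have hσ' : ∀ w, T.IsOuter w → σ.symm w = w := fun w hw => by rw [σ.symm_apply_eq, hσ w hw]
    exact ⟨σ.symm w, not_isOuter_apply hσ' hw, by simp⟩
  outer_spec w hw := by simp [hσ w hw, s.outer_spec w hw]

theorem IsCW.exists_cwMoveAt (h : s.IsCW b) : ∃ t, T.CWMoveAt s t b := by
  obtain ⟨σ, hσ_badj, hσ_fix⟩ := Equiv.Perm.exists_apply_add_one h.badj_injective
  have hσ_outer : ∀ w, T.IsOuter w → σ w = w := fun w hw =>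
    hσ_fix w fun c hc => h.not_isOuter_badj c (hc ▸ hw)
  have hinc : ∀ w, ∃ c, s.toFun (σ w) = T.wvert w c := fun w => by
    by_cases hw : ∃ c, w = T.badj b c
    · obtain ⟨c, rfl⟩ := hw
      exact ⟨c + 2, by
        rw [hσ_badj, h.apply_badj_add_one, bvert_eq_wvert_badj b (show c + 2 ≠ c by omega)]⟩
    · push Not at hw
      rw [hσ_fix w hw]
      exact s.incident w
  refine ⟨s.compPerm σ hσ_outer hinc, h, fun c => ?_, fun w hw => ?_⟩
  · exact (congrArg s.toFun (hσ_badj c)).trans (h.apply_badj_add_one c)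
  · exact congrArg s.toFun (hσ_fix w hw)

end State

theorem CWMoveAt.unique (h : T.CWMoveAt s t b) (h' : T.CWMoveAt s t' b) : t = t' := by
  refine State.ext (funext fun w => ?_)
  by_cases hw : ∃ c, w = T.badj b c
  · obtain ⟨c, rfl⟩ := hw
    rw [h.2.1 c, h'.2.1 c]
  · push Not at hw
    rw [h.2.2 w hw, h'.2.2 w hw]

theorem CWMoveAt.isCW_of_ne (h : T.CWMoveAt s t b) (h' : s.IsCW b') (hbb : b ≠ b') :
    t.IsCW b' := by
  have hdisj : ∀ c c', T.badj b' c ≠ T.badj b c' := h'.badj_ne_badj h.1 hbb.symm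
  refine ⟨fun w hw hwb => ?_, fun c => by rw [h.2.2 _ (hdisj c), h'.2]⟩
  by_cases hw' : ∃ c, w = T.badj b c
  · obtain ⟨c, rfl⟩ := hw'
    rw [State.arrowBlack, h.2.1 c, T.bvert_col] at hwb
    exact hdisj (c + 2) c (by rw [← hwb, T.badj_wadj])
  · push Not at hw'
    exact h'.1 w hw (by rw [State.arrowBlack, ← h.2.2 w hw']; exact hwb)

theorem CWMoveAt.diamond (h : T.CWMoveAt s t b) (h' : T.CWMoveAt s t' b') (hbb : b ≠ b') :
    ∃ u, T.CWMoveAt t u b' ∧ T.CWMoveAt t' u b := by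
  obtain ⟨u, hu⟩ := (h.isCW_of_ne h'.1 hbb).exists_cwMoveAt
  have hdisj : ∀ c c', T.badj b c ≠ T.badj b' c' := h.1.badj_ne_badj h'.1 hbb
  refine ⟨u, hu, h'.isCW_of_ne h.1 hbb.symm, fun c => ?_, fun w hw => ?_⟩
  · rw [hu.2.2 _ (hdisj c), h.2.1]
  · by_cases hw' : ∃ c, w = T.badj b' c
    · obtain ⟨c, rfl⟩ := hw'
      rw [hu.2.1, h'.2.1]
    · push Not at hw'
      rw [hu.2.2 w hw', h.2.2 w hw, h'.2.2 w hw']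

abbrev cwLTS (T : Trinity) (s : T.State) (b : T.Black) (t : T.State) : Prop := T.CWMoveAt s t b

theorem cwLTS_deterministic : LTS.Deterministic T.cwLTS := fun _ _ _ _ => CWMoveAt.unique

theorem cwLTS_diamond : LTS.Diamond T.cwLTS := fun _ _ _ _ _ hbb h h' => h.diamond h' hbb

theorem Walk.append {l l' : List (T.Black × Bool)} {u : T.State}
    (h : T.Walk s l t) (h' : T.Walk t l' u) : T.Walk s (l ++ l') u := by
  induction h with
  | nil => exact h'
  | cw hm _ ih => exact .cw hm (ih h')
  | ccw hm _ ih => exact .ccw hm (ih h')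

theorem exists_cwWalk_of_transGen (h : Relation.TransGen (LTS.Step T.cwLTS) s t) :
    ∃ l, l ≠ [] ∧ T.CWWalk s l t := by
  induction h with
  | single hst =>
    obtain ⟨b, hb⟩ := hst
    exact ⟨[b], List.cons_ne_nil _ _, .cw hb (.nil _)⟩
  | tail _ htu ih =>
    obtain ⟨b, hb⟩ := htu
    obtain ⟨l, -, hl⟩ := ih
    refine ⟨l ++ [b], by simp, ?_⟩
    rw [CWWalk, List.map_append]
    exact hl.append (.cw hb (.nil _))

theorem Reaches.trans {u : T.State} : T.Reaches s t → T.Reaches t u → T.Reaches s u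
  | ⟨_, hst⟩, ⟨_, htu⟩ => ⟨_, hst.append htu⟩

theorem InAcyclic.of_reaches (hs : T.InAcyclic s) (h : T.Reaches s t) : T.InAcyclic t :=
  fun u hu => hs u (h.trans hu)

theorem InAcyclic.of_cwMoveAt (hs : T.InAcyclic s) (h : T.CWMoveAt s t b) : T.InAcyclic t :=
  hs.of_reaches ⟨_, .cw h (.nil t)⟩

theorem InAcyclic.of_cwMoveAt_symm (hs : T.InAcyclic s) (h : T.CWMoveAt t s b) : T.InAcyclic t :=
  hs.of_reaches ⟨_, .ccw h (.nil t)⟩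

theorem InAcyclic.acc (hs : T.InAcyclic s) : Acc (flip (LTS.Step T.cwLTS)) s :=
  acc_flip_of_finite (fun _ _ hx ⟨_, h⟩ => hx.of_cwMoveAt h)
    (fun x hx hxx => hx x ⟨[], .nil x⟩ (exists_cwWalk_of_transGen hxx)) hs

theorem InAcyclic.potential_eq_cons (hs : T.InAcyclic s) (h : T.CWMoveAt s t b) :
    LTS.potential T.cwLTS s = b ::ₘ LTS.potential T.cwLTS t :=
  LTS.potential_eq_cons cwLTS_deterministic cwLTS_diamond hs.acc h

theorem InAcyclic.count_sub_count_eq {l : List (T.Black × Bool)} (hs : T.InAcyclic s)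
    (h : T.Walk s l t) (b : T.Black) :
    (l.count (b, true) : ℤ) - l.count (b, false) =
      (LTS.potential T.cwLTS s).count b - (LTS.potential T.cwLTS t).count b := by
  induction h with
  | nil => simp
  | cw hm _ ih =>
    have := ih (hs.of_cwMoveAt hm)
    rw [hs.potential_eq_cons hm]
    grind [Multiset.count_cons]
  | ccw hm _ ih =>
    have := ih (hs.of_cwMoveAt_symm hm)
    rw [(hs.of_cwMoveAt_symm hm).potential_eq_cons hm] at this
    grind [Multiset.count_cons]

end Trinity

theorem walks_with_equal_endpoints_have_equal_multiplicities_general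
    (T : Trinity) (s t : T.State) (hacyc : T.InAcyclic s)
    (l₁ l₂ : List (T.Black × Bool)) (h₁ : T.Walk s l₁ t) (h₂ : T.Walk s l₂ t) :
    ∀ b : T.Black,
      (l₁.count (b, true) : ℤ) - (l₁.count (b, false) : ℤ) =
      (l₂.count (b, true) : ℤ) - (l₂.count (b, false) : ℤ) := fun b => by
  rw [hacyc.count_sub_count_eq h₁, hacyc.count_sub_count_eq h₂]

/-- Lemma 3.2.  In an acyclic connected component of the
state transition graph of a planar or toric trinity, if two paths connect the
same pair of states, then the algebraic multiplicity (exponent sum of clockwise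
minus counter-clockwise moves) of each black triangle is the same along the two
paths. -/
theorem walks_with_equal_endpoints_have_equal_multiplicities
    (T : Trinity) (hpt : T.Planar ∨ T.Toric) (s t : T.State) (hacyc : T.InAcyclic s)
    (l₁ l₂ : List (T.Black × Bool)) (h₁ : T.Walk s l₁ t) (h₂ : T.Walk s l₂ t) :
    ∀ b : T.Black,
      (l₁.count (b, true) : ℤ) - (l₁.count (b, false) : ℤ) =
      (l₂.count (b, true) : ℤ) - (l₂.count (b, false) : ℤ) :=
  walks_with_equal_endpoints_have_equal_multiplicities_general T s t hacyc l₁ l₂ h₁ h₂
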